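/- Let 0 < T ≤ π/2, π − T < φ_W < π, and T ≥ −tan φ_W (i.e., (φ_W, T) ∈ D₂'' ∪ D₂'''). Then F¹_{φ_W,T} has exactly one root in the open interval (0,1). -/
import Mathlib


open Real

/-- The determinant function
`F¹_{φ_W,T}(a) = -2a - a² sin(2aT) sin(2φ_W) - sin(2aT) sin(2φ_W) + 2a cos(2aT) cos(2φ_W)`. -/
noncomputable def F1 (φW T a : ℝ) : ℝ :=
  -2 * a - a ^ 2 * Real.sin (2 * a * T) * Real.sin (2 * φW)
    - Real.sin (2 * a * T) * Real.sin (2 * φW)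
    + 2 * a * Real.cos (2 * a * T) * Real.cos (2 * φW)

lemma F1_factor (φW T a : ℝ) :
    F1 φW T a = -4 * (Real.sin (a * T) * Real.cos φW + a * Real.cos (a * T) * Real.sin φW)
      * (a * Real.sin (a * T) * Real.cos φW + Real.cos (a * T) * Real.sin φW) := by
  have h1 := Real.sin_sq_add_cos_sq (a * T)
  have h2 := Real.sin_sq_add_cos_sq φW
  unfold F1
  rw [show (2:ℝ) * a * T = 2 * (a * T) by ring]
  rw [Real.sin_two_mul (a * T), Real.cos_two_mul (a * T), Real.sin_two_mul φW,
    Real.cos_two_mul φW]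
  linear_combination (4 * a * Real.cos φW ^ 2) * h1 + (4 * a * Real.cos (a * T) ^ 2) * h2

theorem F1_one_root_on_D2''_union_D2''' (φW T : ℝ) (hT0 : 0 < T) (hT : T ≤ Real.pi / 2)
    (hφ1 : Real.pi - T < φW) (hφ2 : φW < Real.pi) (htan : -Real.tan φW ≤ T) :
    ∃! a, a ∈ Set.Ioo (0:ℝ) 1 ∧ F1 φW T a = 0 := by
  have hπ := Real.pi_pos
  have hφhalf : Real.pi / 2 < φW := by linarith
  have hs2 : 0 < Real.sin φW := Real.sin_pos_of_pos_of_lt_pi (by linarith) hφ2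
  have hc2 : Real.cos φW < 0 := Real.cos_neg_of_pi_div_two_lt_of_lt hφhalf (by linarith)
  -- sin φW + T cos φW ≤ 0
  have hs2T : Real.sin φW + T * Real.cos φW ≤ 0 := by
    rw [Real.tan_eq_sin_div_cos] at htan
    have := (le_div_iff_of_neg hc2).mp (by linarith : -T ≤ Real.sin φW / Real.cos φW)
    linarith
  -- basic facts on (0,1)
  have hmem : ∀ x ∈ Set.Ioo (0:ℝ) 1, 0 < x * T ∧ x * T < Real.pi / 2 := by
    intro x hx
    constructor
    · exact mul_pos hx.1 hT0
    · nlinarith [hx.2, hx.1]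
  have hc1 : ∀ x ∈ Set.Ioo (0:ℝ) 1, 0 < Real.cos (x * T) := by
    intro x hx
    exact Real.cos_pos_of_mem_Ioo ⟨by linarith [(hmem x hx).1], (hmem x hx).2⟩
  have hs1 : ∀ x ∈ Set.Ioo (0:ℝ) 1, 0 < Real.sin (x * T) := by
    intro x hx
    exact Real.sin_pos_of_pos_of_lt_pi (hmem x hx).1 (by linarith [(hmem x hx).2])
  -- tan x > x gives sin(xT) > xT cos(xT)
  have hsgt : ∀ x ∈ Set.Ioo (0:ℝ) 1, x * T * Real.cos (x * T) < Real.sin (x * T) := by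
    intro x hx
    have ht := Real.lt_tan (hmem x hx).1 (hmem x hx).2
    rw [Real.tan_eq_sin_div_cos] at ht
    have := (lt_div_iff₀ (hc1 x hx)).mp ht
    linarith
  -- the first factor is negative on (0,1)
  have hf : ∀ x ∈ Set.Ioo (0:ℝ) 1,
      Real.sin (x * T) * Real.cos φW + x * Real.cos (x * T) * Real.sin φW < 0 := by
    intro x hx
    have h1 := hsgt x hx
    have h2 := hc1 x hx
    have hx0 := hx.1
    nlinarith [mul_pos hx0 h2, mul_nonneg (mul_pos hx0 h2).le
      (neg_nonneg.mpr hs2T)]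
  -- the second factor g
  set g : ℝ → ℝ := fun x => x * Real.sin (x * T) * Real.cos φW + Real.cos (x * T) * Real.sin φW
    with hg
  have hgc : ContinuousOn g (Set.Icc (0:ℝ) 1) := by
    apply Continuous.continuousOn
    fun_prop
  have hg0 : g 0 = Real.sin φW := by simp [hg]
  have hg1 : g 1 = Real.sin (T + φW) := by simp [hg, Real.sin_add]
  have hg1neg : g 1 < 0 := by
    rw [hg1]
    have h := Real.sin_sub_pi (T + φW)
    have hpos : 0 < Real.sin (T + φW - Real.pi) :=
      Real.sin_pos_of_pos_of_lt_pi (by linarith) (by linarith)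
    linarith
  have hg0pos : 0 < g 0 := by rw [hg0]; exact hs2
  -- existence of a root of g in (0,1)
  obtain ⟨a, haI, hga⟩ : ∃ a ∈ Set.Ioo (0:ℝ) 1, g a = 0 := by
    have h := intermediate_value_Ioo' (by norm_num : (0:ℝ) ≤ 1) hgc
    have h0 : (0:ℝ) ∈ Set.Ioo (g 1) (g 0) := ⟨hg1neg, hg0pos⟩
    obtain ⟨x, hx, hgx⟩ := h h0
    exact ⟨x, hx, hgx⟩
  -- uniqueness of roots of g on (0,1)
  have huniq : ∀ x ∈ Set.Ioo (0:ℝ) 1, ∀ y ∈ Set.Ioo (0:ℝ) 1, g x = 0 → g y = 0 → x = y := by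
    have key : ∀ x ∈ Set.Ioo (0:ℝ) 1, ∀ y ∈ Set.Ioo (0:ℝ) 1, x < y →
        g x = 0 → g y = 0 → False := by
      intro x hx y hy hxy hgx hgy
      have hc1x := hc1 x hx
      have hc1y := hc1 y hy
      have hs1x := hs1 x hx
      have hs1y := hs1 y hy
      -- tan (xT) < tan (yT)
      have hmono : Real.tan (x * T) < Real.tan (y * T) :=
        Real.tan_lt_tan_of_nonneg_of_lt_pi_div_two (hmem x hx).1.le (hmem y hy).2
          (by nlinarith)
      rw [Real.tan_eq_sin_div_cos, Real.tan_eq_sin_div_cos] at hmono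
      have hcross : Real.sin (x * T) * Real.cos (y * T)
          < Real.sin (y * T) * Real.cos (x * T) :=
        (div_lt_div_iff₀ hc1x hc1y).mp hmono
      -- from g x = 0, g y = 0
      simp only [hg] at hgx hgy
      -- x sin(xT)(-cosφ) = cos(xT) sinφ, similarly for y
      have ex : x * Real.sin (x * T) * (-Real.cos φW) = Real.cos (x * T) * Real.sin φW := by
        linarith
      have ey : y * Real.sin (y * T) * (-Real.cos φW) = Real.cos (y * T) * Real.sin φW := by
        linarith
      -- cross-multiply
      have hkey : x * Real.sin (x * T) * Real.cos (y * T) * (-Real.cos φW)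
          = y * Real.sin (y * T) * Real.cos (x * T) * (-Real.cos φW) := by
        linear_combination Real.cos (y * T) * ex - Real.cos (x * T) * ey
      have hcpos : 0 < -Real.cos φW := by linarith
      have heq : x * Real.sin (x * T) * Real.cos (y * T)
          = y * Real.sin (y * T) * Real.cos (x * T) :=
        mul_right_cancel₀ (ne_of_gt hcpos) hkey
      have hy0 : (0:ℝ) < y := lt_trans hx.1 hxy
      have hlt : x * Real.sin (x * T) * Real.cos (y * T)
          < y * Real.sin (y * T) * Real.cos (x * T) := by
        calc x * Real.sin (x * T) * Real.cos (y * T)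
            = x * (Real.sin (x * T) * Real.cos (y * T)) := by ring
          _ < y * (Real.sin (x * T) * Real.cos (y * T)) :=
              mul_lt_mul_of_pos_right hxy (mul_pos hs1x hc1y)
          _ < y * (Real.sin (y * T) * Real.cos (x * T)) :=
              mul_lt_mul_of_pos_left hcross hy0
          _ = y * Real.sin (y * T) * Real.cos (x * T) := by ring
      linarith
    intro x hx y hy hgx hgy
    rcases lt_trichotomy x y with h | h | h
    · exact absurd (key x hx y hy h hgx hgy) (not_false)
    · exact h
    · exact absurd (key y hy x hx h hgy hgx) (not_false)
  refine ⟨a, ⟨haI, ?_⟩, ?_⟩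
  · rw [F1_factor]
    simp only [hg] at hga
    rw [hga, mul_zero]
  · rintro b ⟨hbI, hFb⟩
    rw [F1_factor] at hFb
    have hfb := hf b hbI
    have : a * Real.sin (a * T) * Real.cos φW + Real.cos (a * T) * Real.sin φW = 0 := hga
    rcases mul_eq_zero.mp hFb with h | h
    · rcases mul_eq_zero.mp h with h' | h'
      · norm_num at h'
      · linarith [hfb]
    · exact huniq b hbI a haI h hga
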